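/- For integer α ≥ 2, a positive probability density z on ℝ, q ∈ [0,1], and a mean vector ψ = (ψ₁,…,ψ_n) ∈ ℝⁿ, letting P = product density ∏ᵢ z(xᵢ − ψᵢ) and Q = ∏ᵢ z(xᵢ), the Rényi divergence satisfies D_α((1−q)Q + qP ‖ Q) = (1/(α−1)) · log Σ_{k=0}^{α} C(α,k) q^k (1−q)^{α−k} ∏ᵢ ∫ (z(x−ψᵢ)/z(x))^k z(x) dx, assuming all moment integrals are finite. -/

import Mathlib

/-! Writing the mixture ratio as `(1 - q) + q · P/Q` and expanding its `α`-th power binomially, the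
`k`-th term times `Q` is `∏ᵢ (z(xᵢ - ψᵢ)/z(xᵢ))^k z(xᵢ)`, a product of functions of single
coordinates, so Fubini factors its integral into one-dimensional moments. -/

open MeasureTheory Real Finset

theorem mixture_div_pow_mul_eq_sum {K : Type*} [Field K] {a : K} (ha : a ≠ 0) (b q : K) (α : ℕ) :
    (((1 - q) * a + q * b) / a) ^ α * a =
      ∑ k ∈ range (α + 1), (α.choose k : K) * q ^ k * (1 - q) ^ (α - k) * ((b / a) ^ k * a) := by
  have hsplit : ((1 - q) * a + q * b) / a = q * (b / a) + (1 - q) := by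
    field_simp
    ring
  rw [hsplit, add_pow, sum_mul]
  refine sum_congr rfl fun k _ => ?_
  ring

theorem prod_div_prod_pow_mul_prod {ι M : Type*} [Fintype ι] [DivisionCommMonoid M]
    (a b : ι → M) (k : ℕ) :
    ((∏ i, b i) / ∏ i, a i) ^ k * ∏ i, a i = ∏ i, (b i / a i) ^ k * a i := by
  rw [prod_mul_distrib, prod_pow, prod_div_distrib]

theorem integral_sum_mul_prod {ι κ E 𝕜 : Type*} [Fintype ι] [RCLike 𝕜] [MeasurableSpace E]
    {μ : ι → Measure E} [∀ i, SigmaFinite (μ i)] (s : Finset κ) (c : κ → 𝕜)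
    {f : κ → ι → E → 𝕜} (hf : ∀ k ∈ s, ∀ i, Integrable (f k i) (μ i)) :
    ∫ x : ι → E, ∑ k ∈ s, c k * ∏ i, f k i (x i) ∂Measure.pi μ =
      ∑ k ∈ s, c k * ∏ i, ∫ t, f k i t ∂μ i := by
  rw [integral_finsetSum s fun k hk => ((Integrable.fintype_prod (hf k hk)).const_mul _)]
  refine sum_congr rfl fun k _ => ?_
  rw [integral_const_mul, integral_fintype_prod_eq_prod]

theorem renyi_product_mixture_general (n : ℕ) (α : ℕ) (z : ℝ → ℝ)
    (hz : ∀ x, 0 < z x)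
    (q : ℝ) (ψ : Fin n → ℝ)
    (hint : ∀ i : Fin n, ∀ k : ℕ, k ≤ α →
      Integrable (fun x => (z (x - ψ i) / z x) ^ k * z x)) :
    (1/((α:ℝ)-1)) * Real.log (∫ x : Fin n → ℝ,
        (((1-q) * ∏ i, z (x i) + q * ∏ i, z (x i - ψ i)) / ∏ i, z (x i)) ^ (α:ℝ)
          * ∏ i, z (x i))
    = (1/((α:ℝ)-1)) * Real.log (∑ k ∈ Finset.range (α+1),
        (α.choose k : ℝ) * q^k * (1-q)^(α-k) *
          ∏ i, ∫ x, (z (x - ψ i) / z x) ^ k * z x) := by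
  have hexpand (x : Fin n → ℝ) :
      (((1-q) * ∏ i, z (x i) + q * ∏ i, z (x i - ψ i)) / ∏ i, z (x i)) ^ (α:ℝ) * ∏ i, z (x i) =
        ∑ k ∈ range (α + 1), (α.choose k : ℝ) * q ^ k * (1 - q) ^ (α - k) *
          ∏ i, (z (x i - ψ i) / z (x i)) ^ k * z (x i) := by
    simp_rw [rpow_natCast, ← prod_div_prod_pow_mul_prod]
    have hQ : ∏ i, z (x i) ≠ 0 := (prod_pos fun i _ => hz (x i)).ne'
    exact mixture_div_pow_mul_eq_sum hQ _ _ _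
  simp_rw [hexpand]
  congr 2
  exact integral_sum_mul_prod _ _ fun k hk i => hint i k (Nat.lt_succ_iff.mp (mem_range.mp hk))

/-- The order-α (integer α ≥ 2) Rényi divergence between the subsampled product
mechanism (1−q)Q + qP, with P = ∏ᵢ z(xᵢ−ψᵢ) and Q = ∏ᵢ z(xᵢ), and the baseline Q
equals (1/(α−1)) log of a binomial sum of products of one-dimensional
likelihood-ratio moments. -/
theorem renyi_product_mixture (n : ℕ) (α : ℕ) (hα : 2 ≤ α) (z : ℝ → ℝ)
    (hz : ∀ x, 0 < z x) (hzd : ∫ x, z x = 1)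
    (q : ℝ) (hq : q ∈ Set.Icc (0:ℝ) 1) (ψ : Fin n → ℝ)
    (hint : ∀ i : Fin n, ∀ k : ℕ, k ≤ α →
      Integrable (fun x => (z (x - ψ i) / z x) ^ k * z x)) :
    (1/((α:ℝ)-1)) * Real.log (∫ x : Fin n → ℝ,
        (((1-q) * ∏ i, z (x i) + q * ∏ i, z (x i - ψ i)) / ∏ i, z (x i)) ^ (α:ℝ)
          * ∏ i, z (x i))
    = (1/((α:ℝ)-1)) * Real.log (∑ k ∈ Finset.range (α+1),
        (α.choose k : ℝ) * q^k * (1-q)^(α-k) *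
          ∏ i, ∫ x, (z (x - ψ i) / z x) ^ k * z x) :=
  renyi_product_mixture_general n α z hz q ψ hint
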